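/- arXiv:2507.08777 — 8 statements merged into one kernel-verified Lean document; each statement's English description precedes it below -/
import Mathlib

section
/- If I is a monomial ideal in a polynomial ring S = k[x_1,...,x_n], f is a monomial, and the colon ideal I : f equals the monomial prime ideal P = (x_1,...,x_t), then for each i = 1,...,t, the exponent of x_i in f is strictly less than the maximum exponent of x_i among the minimal monomial generators of I. -/
open MvPolynomial

/-- `e` is the exponent vector of a (minimal) monomial generator of the monomial ideal `I`:
the monomial `x^e` lies in `I` but no proper divisor of it does. -/
def IsMinimalMonomialGen {n : ℕ} {k : Type*} [Field k]
    (I : Ideal (MvPolynomial (Fin n) k)) (e : Fin n →₀ ℕ) : Prop :=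
  (monomial e (1 : k)) ∈ I ∧
    ∀ e' : Fin n →₀ ℕ, e' ≤ e → e' ≠ e → (monomial e' (1 : k)) ∉ I

/-- Every monomial in an ideal is divisible by a minimal monomial generator. -/
lemma exists_min_gen {n : ℕ} {k : Type*} [Field k]
    (I : Ideal (MvPolynomial (Fin n) k)) :
    ∀ (N : ℕ) (b : Fin n →₀ ℕ), (∑ j, b j) ≤ N → (monomial b (1 : k)) ∈ I →
      ∃ e, e ≤ b ∧ IsMinimalMonomialGen I e := by
  intro N
  induction N with
  | zero =>
    intro b hb hbI
    refine ⟨b, le_refl _, hbI, ?_⟩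
    intro e' h1 h2 _
    apply h2
    have hb0 : ∀ j, b j = 0 := by
      intro j
      have : b j ≤ 0 := le_trans (Finset.single_le_sum (f := fun x => b x)
        (fun _ _ => Nat.zero_le _) (Finset.mem_univ j)) hb
      omega
    ext j
    have := Finsupp.le_def.mp h1 j
    have h2 := hb0 j
    omega
  | succ N ih =>
    intro b hb hbI
    by_cases h : ∀ e', e' ≤ b → e' ≠ b → (monomial e' (1 : k)) ∉ I
    · exact ⟨b, le_refl _, hbI, h⟩
    · push_neg at h
      obtain ⟨e', h1, h2, h3⟩ := h
      have hle : ∀ j, e' j ≤ b j := Finsupp.le_def.mp h1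
      obtain ⟨j, hj⟩ := Finsupp.ne_iff.mp h2
      have hlt : e' j < b j := lt_of_le_of_ne (hle j) hj
      have hsum : (∑ j, e' j) < ∑ j, b j :=
        Finset.sum_lt_sum (fun j _ => hle j) ⟨j, Finset.mem_univ j, hlt⟩
      obtain ⟨e, he, hmin⟩ := ih e' (by omega) h3
      exact ⟨e, he.trans h1, hmin⟩

/-- If `I` is a monomial ideal, `f = x^a` is a monomial and `I : f` is the monomial prime
ideal `(x_1, …, x_t)`, then for each `i ≤ t` the exponent of `x_i` in `f` is strictly
smaller than the maximal exponent of `x_i` among the minimal monomial generators of `I`. -/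
theorem deg_lt_rho_of_colon_eq_prime {n t : ℕ} {k : Type*} [Field k] (ht : t ≤ n)
    (A : Set (Fin n →₀ ℕ)) (I : Ideal (MvPolynomial (Fin n) k))
    (hI : I = Ideal.span ((fun e => monomial e (1 : k)) '' A))
    (a : Fin n →₀ ℕ)
    (hcolon : Submodule.colon I (Ideal.span {monomial a (1 : k)}) =
      Ideal.span ((fun i : Fin n => (X i : MvPolynomial (Fin n) k)) '' {i | (i : ℕ) < t})) :
    ∀ i : Fin n, (i : ℕ) < t →
      ∃ e : Fin n →₀ ℕ, IsMinimalMonomialGen I e ∧ a i < e i := by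
  intro i hi
  classical
  -- X i lies in the colon ideal
  have hXi : (X i : MvPolynomial (Fin n) k) ∈
      Submodule.colon I (Ideal.span {monomial a (1 : k)}) := by
    rw [hcolon]
    exact Ideal.subset_span ⟨i, hi, rfl⟩
  have hfmem : (monomial a (1 : k)) ∈ Ideal.span {monomial a (1 : k)} :=
    Submodule.mem_span_singleton_self _
  have hmul : (X i : MvPolynomial (Fin n) k) * monomial a (1 : k) ∈ I :=
    Submodule.mem_colon.mp hXi _ hfmem
  have hXmm : (X i : MvPolynomial (Fin n) k) * monomial a (1 : k) =
      monomial (Finsupp.single i 1 + a) (1 : k) := by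
    rw [X, monomial_mul, one_mul]
  rw [hXmm] at hmul
  set b : Fin n →₀ ℕ := Finsupp.single i 1 + a with hbdef
  obtain ⟨e, heb, hmin⟩ := exists_min_gen I (∑ j, b j) b le_rfl hmul
  refine ⟨e, hmin, ?_⟩
  by_contra hcon
  push_neg at hcon
  -- then e ≤ a, so monomial a ∈ I, so 1 ∈ colon ideal = prime, contradiction
  have hea : e ≤ a := by
    rw [Finsupp.le_def]
    intro j
    by_cases hji : j = i
    · subst hji; exact hcon
    · have := Finsupp.le_def.mp heb j
      simpa [hbdef, Finsupp.single_apply, Ne.symm hji] using this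
  have haI : (monomial a (1 : k)) ∈ I := by
    have heI := hmin.1
    rw [hI, mem_ideal_span_monomial_image] at heI
    rw [hI, mem_ideal_span_monomial_image]
    intro xi hxi
    rw [support_monomial, if_neg (one_ne_zero)] at hxi
    simp only [Finset.mem_singleton] at hxi
    subst hxi
    obtain ⟨si, hsi, hsile⟩ := heI e (by
      rw [support_monomial, if_neg (one_ne_zero)]; simp)
    exact ⟨si, hsi, hsile.trans hea⟩
  have hone : (1 : MvPolynomial (Fin n) k) ∈
      Submodule.colon I (Ideal.span {monomial a (1 : k)}) := by
    rw [Submodule.mem_colon]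
    intro p hp
    obtain ⟨c, rfl⟩ := Ideal.mem_span_singleton'.mp hp
    rw [one_smul]
    exact Ideal.mul_mem_left _ _ haI
  rw [hcolon] at hone
  have : Ideal.span ((fun i : Fin n => (X i : MvPolynomial (Fin n) k)) '' {i | (i : ℕ) < t}) =
      Ideal.span (MvPolynomial.X '' {i : Fin n | (i : ℕ) < t}) := rfl
  rw [this, mem_ideal_span_X_image] at hone
  obtain ⟨j, _, hj⟩ := hone 0 (by
    rw [mem_support_iff]
    simp)
  simp at hj
end

section
/- If J is a squarefree monomial ideal in S = k[x_1,...,x_n], t >= 1, and f is a monomial with J^t : f = (x_1,...,x_s) a monomial prime ideal, then the exponent of x_i in f is strictly less than t for each i = 1,...,s. -/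
/-!
Every generator of `J ^ t` is a product of `t` squarefree monomials, so `x_i` occurs in it with
exponent at most `t`. If `x_i` had exponent at least `t` in `f`, then any generator dividing
`x_i f` would already divide `f`; hence `x_i ∈ J ^ t : f` would force `f ∈ J ^ t`, making
`J ^ t : f` the unit ideal rather than `(x_1, …, x_s)`.
-/

open MvPolynomial
open scoped Pointwise

namespace MvPolynomial

variable {σ R : Type*} [CommSemiring R]

theorem monomial_one_mem_span_monomial_image_iff [Nontrivial R] {e : σ →₀ ℕ}
    {D : Set (σ →₀ ℕ)} :
    monomial e (1 : R) ∈ Ideal.span ((fun d => monomial d (1 : R)) '' D) ↔ ∃ d ∈ D, d ≤ e := by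
  classical
  rw [mem_ideal_span_monomial_image, support_monomial, if_neg one_ne_zero]
  simp

theorem span_monomial_image_mul_span_monomial_image (D E : Set (σ →₀ ℕ)) :
    Ideal.span ((fun d => monomial d (1 : R)) '' D) *
        Ideal.span ((fun d => monomial d (1 : R)) '' E) =
      Ideal.span ((fun d => monomial d (1 : R)) '' (D + E)) := by
  rw [Ideal.span_mul_span', ← Set.image2_mul, ← Set.image2_add, Set.image2_image_left,
    Set.image2_image_right, Set.image_image2]
  simp_rw [monomial_mul, one_mul]

def IsMonomialWithDegreeOfLE (I : Ideal (MvPolynomial σ R)) (i : σ) (c : ℕ) : Prop :=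
  ∃ D : Set (σ →₀ ℕ), I = Ideal.span ((fun d => monomial d (1 : R)) '' D) ∧ ∀ d ∈ D, d i ≤ c

theorem isMonomialWithDegreeOfLE_top (i : σ) :
    IsMonomialWithDegreeOfLE (⊤ : Ideal (MvPolynomial σ R)) i 0 :=
  ⟨{0}, by simp, by simp⟩

namespace IsMonomialWithDegreeOfLE

variable {I K : Ideal (MvPolynomial σ R)} {i : σ} {c c' : ℕ}

theorem mul (hI : IsMonomialWithDegreeOfLE I i c) (hK : IsMonomialWithDegreeOfLE K i c') :
    IsMonomialWithDegreeOfLE (I * K) i (c + c') := by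
  obtain ⟨D, rfl, hD⟩ := hI
  obtain ⟨E, rfl, hE⟩ := hK
  refine ⟨D + E, span_monomial_image_mul_span_monomial_image D E, ?_⟩
  rintro _ ⟨d, hd, e, he, rfl⟩
  exact add_le_add (hD d hd) (hE e he)

theorem pow (hI : IsMonomialWithDegreeOfLE I i c) (t : ℕ) :
    IsMonomialWithDegreeOfLE (I ^ t) i (t * c) := by
  induction t with
  | zero => simpa using isMonomialWithDegreeOfLE_top i
  | succ t ih => simpa [pow_succ, Nat.succ_mul] using ih.mul hI

theorem monomial_mem_of_add_single_mem [Nontrivial R] (hI : IsMonomialWithDegreeOfLE I i c)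
    {e : σ →₀ ℕ} (he : c ≤ e i) (h : monomial (e + Finsupp.single i 1) (1 : R) ∈ I) :
    monomial e (1 : R) ∈ I := by
  obtain ⟨D, rfl, hD⟩ := hI
  obtain ⟨d, hd, hde⟩ := monomial_one_mem_span_monomial_image_iff.mp h
  refine monomial_one_mem_span_monomial_image_iff.mpr ⟨d, hd, fun j => ?_⟩
  rcases eq_or_ne j i with rfl | hj
  · exact (hD d hd).trans he
  · simpa [Finsupp.single_apply, hj.symm] using hde j

end IsMonomialWithDegreeOfLE

theorem isMonomialWithDegreeOfLE_span_prod_X (B : Set (Finset σ)) (i : σ) :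
    IsMonomialWithDegreeOfLE
      (Ideal.span ((fun w => ∏ j ∈ w, (X j : MvPolynomial σ R)) '' B)) i 1 := by
  classical
  refine ⟨(fun w => ∑ j ∈ w, Finsupp.single j 1) '' B, ?_, ?_⟩
  · simp only [Set.image_image, monomial_sum_one]
    rfl
  · rintro _ ⟨w, -, rfl⟩
    simp only [Finsupp.coe_finsetSum, Finset.sum_apply, Finsupp.single_apply, Finset.sum_ite_eq']
    exact ite_le_one le_rfl zero_le_one

end MvPolynomial

theorem deg_lt_t_of_colon_pow_eq_prime_general {n s t : ℕ} {k : Type*} [Field k]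
    (B : Set (Finset (Fin n))) (J : Ideal (MvPolynomial (Fin n) k))
    (hJ : J = Ideal.span ((fun w : Finset (Fin n) => ∏ j ∈ w, (X j : MvPolynomial (Fin n) k)) '' B))
    (a : Fin n →₀ ℕ)
    (hcolon : Submodule.colon (J ^ t) (Ideal.span {monomial a (1 : k)}) =
      Ideal.span ((fun i : Fin n => (X i : MvPolynomial (Fin n) k)) '' {i | (i : ℕ) < s})) :
    ∀ i : Fin n, (i : ℕ) < s → a i < t := by
  intro i hi
  by_contra! hta
  have hJt : IsMonomialWithDegreeOfLE (J ^ t) i t := by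
    simpa [hJ] using (isMonomialWithDegreeOfLE_span_prod_X B i).pow t
  have hXa : X i * monomial a (1 : k) ∈ J ^ t :=
    Ideal.mem_colon_span_singleton.mp (hcolon ▸ Ideal.subset_span ⟨i, hi, rfl⟩)
  have ha : monomial a (1 : k) ∈ J ^ t := by
    refine hJt.monomial_mem_of_add_single_mem hta ?_
    rwa [X, monomial_mul, one_mul, add_comm] at hXa
  have hone : 1 * monomial a (1 : k) ∈ J ^ t := by rwa [one_mul]
  rw [← Ideal.mem_colon_span_singleton, hcolon, mem_ideal_span_X_image] at hone
  simp at hone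

/-- If `J` is a squarefree monomial ideal in `k[x_1, …, x_n]`, `t ≥ 1`, and `f = x^a` is a
monomial such that `J^t : f` is the monomial prime ideal `(x_1, …, x_s)`, then the exponent
of `x_i` in `f` is strictly less than `t` for each `i ≤ s`. -/
theorem deg_lt_t_of_colon_pow_eq_prime {n s t : ℕ} {k : Type*} [Field k]
    (hs : s ≤ n) (ht : 1 ≤ t)
    (B : Set (Finset (Fin n))) (J : Ideal (MvPolynomial (Fin n) k))
    (hJ : J = Ideal.span ((fun w : Finset (Fin n) => ∏ j ∈ w, (X j : MvPolynomial (Fin n) k)) '' B))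
    (a : Fin n →₀ ℕ)
    (hcolon : Submodule.colon (J ^ t) (Ideal.span {monomial a (1 : k)}) =
      Ideal.span ((fun i : Fin n => (X i : MvPolynomial (Fin n) k)) '' {i | (i : ℕ) < s})) :
    ∀ i : Fin n, (i : ℕ) < s → a i < t :=
  deg_lt_t_of_colon_pow_eq_prime_general B J hJ a hcolon
end

section
/- Let G be a finite simple graph on vertex set [n] with diameter at most 2, and suppose there is a squarefree monomial f in S = k[x_1,...,x_n] with NI(G)^2 : f = (x_1,...,x_n). Then f = x_1 x_2 ... x_n. -/
/-!
If `v ∉ s`, then `x_v · ∏_{i ∈ s} x_i` lies in `NI(G)^2`. Every generator `x_{N[u]} x_{N[w]}` of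
`NI(G)^2` is divisible by `x_z^2` for a vertex `z ∈ N[u] ∩ N[w]`, which exists because `u` and `w`
are at distance at most `2`. But the squarefree monomial `∏_{i ∈ insert v s} x_i` is not divisible
by any `x_z^2`.
-/

open MvPolynomial
open scoped Classical

/-- The closed neighborhood of a vertex `i` of `G`, as a `Finset`. -/
noncomputable def closedNbhd {n : ℕ} (G : SimpleGraph (Fin n)) (i : Fin n) : Finset (Fin n) :=
  Finset.univ.filter (fun j => j = i ∨ G.Adj i j)

/-- The closed neighborhood ideal of `G` in `k[x_1, …, x_n]`. -/
noncomputable def NI (k : Type*) [Field k] {n : ℕ} (G : SimpleGraph (Fin n)) :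
    Ideal (MvPolynomial (Fin n) k) :=
  Ideal.span (Set.range fun i => ∏ j ∈ closedNbhd G i, X j)

/-- The maximal homogeneous ideal `(x_1, …, x_n)`. -/
noncomputable def maxIdeal (k : Type*) [Field k] (n : ℕ) : Ideal (MvPolynomial (Fin n) k) :=
  Ideal.span (Set.range (X : Fin n → MvPolynomial (Fin n) k))

lemma mem_closedNbhd {n : ℕ} {G : SimpleGraph (Fin n)} {i j : Fin n} :
    j ∈ closedNbhd G i ↔ j = i ∨ G.Adj i j := by
  simp [closedNbhd]

lemma exists_mem_closedNbhd_of_edist_le_two {n : ℕ} {G : SimpleGraph (Fin n)} {u w : Fin n}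
    (h : G.edist u w ≤ 2) : ∃ z, z ∈ closedNbhd G u ∧ z ∈ closedNbhd G w := by
  by_contra! hdisj
  refine (G.two_lt_edist_iff.mpr ⟨?_, ?_, ?_⟩).not_ge h
  · rintro rfl
    exact hdisj u (mem_closedNbhd.mpr (.inl rfl)) (mem_closedNbhd.mpr (.inl rfl))
  · intro hadj
    exact hdisj w (mem_closedNbhd.mpr (.inr hadj)) (mem_closedNbhd.mpr (.inl rfl))
  · ext z
    simp only [SimpleGraph.mem_commonNeighbors, Set.mem_empty_iff_false, iff_false, not_and]
    exact fun hu hw => hdisj z (mem_closedNbhd.mpr (.inr hu)) (mem_closedNbhd.mpr (.inr hw))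

lemma prod_X_notMem_span_X_sq {σ R : Type*} [CommSemiring R] [Nontrivial R] (t : Finset σ) :
    ∏ i ∈ t, (X i : MvPolynomial σ R) ∉ Ideal.span (Set.range fun z => X z ^ 2) := by
  have hsq : (Set.range fun z : σ => (X z : MvPolynomial σ R) ^ 2) =
      (fun e => monomial e 1) '' Set.range fun z => Finsupp.single z 2 := by
    rw [← Set.range_comp]
    exact congrArg Set.range (funext fun z => X_pow_eq_monomial)
  have hprod : ∏ i ∈ t, (X i : MvPolynomial σ R) = monomial (∑ i ∈ t, Finsupp.single i 1) 1 :=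
    (monomial_sum_one t _).symm
  rw [hsq, hprod, mem_ideal_span_monomial_image, support_monomial, if_neg one_ne_zero]
  intro h
  obtain ⟨_, ⟨z, rfl⟩, hle⟩ := h _ (Finset.mem_singleton_self _)
  have hz := Finsupp.single_le_iff.mp hle
  rw [Finsupp.finsetSum_apply] at hz
  simp only [Finsupp.single_apply, Finset.sum_ite_eq'] at hz
  split_ifs at hz <;> omega

lemma sq_NI_le_span_X_sq {n : ℕ} (k : Type*) [Field k] {G : SimpleGraph (Fin n)}
    (hdiam : ∀ u v : Fin n, G.edist u v ≤ 2) :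
    NI k G ^ 2 ≤ Ideal.span (Set.range fun z => X z ^ 2) := by
  rw [sq, NI, Ideal.span_mul_span', Ideal.span_le]
  rintro _ ⟨_, ⟨u, rfl⟩, _, ⟨w, rfl⟩, rfl⟩
  dsimp only
  obtain ⟨z, hzu, hzw⟩ := exists_mem_closedNbhd_of_edist_le_two (hdiam u w)
  rw [← Finset.mul_prod_erase _ _ hzu, ← Finset.mul_prod_erase _ _ hzw,
    mul_mul_mul_comm, ← sq]
  exact Ideal.mul_mem_right _ _ (Ideal.subset_span ⟨z, rfl⟩)

/-- If `G` has diameter at most `2` and `f = ∏_{i ∈ s} x_i` is a squarefree monomial with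
`NI(G)^2 : f = (x_1, …, x_n)`, then `f = x_1 ⋯ x_n`. -/
theorem support_eq_univ_of_colon_eq_max {n : ℕ} {k : Type*} [Field k]
    (G : SimpleGraph (Fin n)) (hdiam : ∀ u v : Fin n, G.edist u v ≤ 2)
    (s : Finset (Fin n))
    (hcolon : Submodule.colon (NI k G ^ 2)
        (Ideal.span {∏ i ∈ s, (X i : MvPolynomial (Fin n) k)}) = maxIdeal k n) :
    (∏ i ∈ s, (X i : MvPolynomial (Fin n) k)) = ∏ i : Fin n, X i := by
  suffices hs : s = Finset.univ by rw [hs]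
  refine Finset.eq_univ_iff_forall.mpr fun v => ?_
  by_contra hv
  have hXv : (X v : MvPolynomial (Fin n) k) ∈ maxIdeal k n := Ideal.subset_span ⟨v, rfl⟩
  rw [← hcolon] at hXv
  have hmem : ∏ i ∈ insert v s, (X i : MvPolynomial (Fin n) k) ∈ NI k G ^ 2 := by
    rw [Finset.prod_insert hv]
    exact Submodule.mem_colon.mp hXv _ (Ideal.mem_span_singleton_self _)
  exact prod_X_notMem_span_X_sq _ (sq_NI_le_span_X_sq k hdiam hmem)
end

section
/- Let G be a simple connected graph, and suppose there exist a subset W of V(G) and a set U ⊇ ∪_{w∈W} N_G[w] such that: any two vertices of W are at distance at most 2 in G, every vertex of U is adjacent to some vertex of W, and every vertex of V(G) \ U has a neighbor in U. Then diam(G) <= 6. -/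
/-- Suppose `G` is a finite connected graph, `W ⊆ V(G)`, and `U` contains the closed
neighborhood of every vertex of `W`; assume any two vertices of `W` are at distance at
most `2`, every vertex of `U` is adjacent to a vertex of `W`, and every vertex outside `U`
has a neighbor in `U`. Then `G` has diameter at most `6`. -/
theorem diam_le_six {V : Type*} [Fintype V] (G : SimpleGraph V) (hconn : G.Connected)
    (W U : Set V)
    (hWU : ∀ w ∈ W, ({w} ∪ G.neighborSet w : Set V) ⊆ U)
    (hWdist : ∀ w₁ ∈ W, ∀ w₂ ∈ W, G.edist w₁ w₂ ≤ 2)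
    (hU : ∀ u ∈ U, ∃ w ∈ W, G.Adj u w)
    (hout : ∀ v ∉ U, ∃ u ∈ U, G.Adj v u) :
    ∀ a b : V, G.edist a b ≤ 6 := by
  have key : ∀ a : V, ∃ w ∈ W, G.edist a w ≤ 2 := by
    intro a
    by_cases ha : a ∈ U
    · obtain ⟨w, hw, hadj⟩ := hU a ha
      refine ⟨w, hw, ?_⟩
      calc G.edist a w = 1 := SimpleGraph.edist_eq_one_iff_adj.mpr hadj
        _ ≤ 2 := by norm_num
    · obtain ⟨u, hu, hadj⟩ := hout a ha
      obtain ⟨w, hw, hadj'⟩ := hU u hu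
      refine ⟨w, hw, ?_⟩
      calc G.edist a w ≤ G.edist a u + G.edist u w := G.edist_triangle
        _ = 1 + 1 := by
            rw [SimpleGraph.edist_eq_one_iff_adj.mpr hadj,
              SimpleGraph.edist_eq_one_iff_adj.mpr hadj']
        _ ≤ 2 := by norm_num
  intro a b
  obtain ⟨w₁, hw₁, h1⟩ := key a
  obtain ⟨w₂, hw₂, h2⟩ := key b
  calc G.edist a b ≤ G.edist a w₁ + G.edist w₁ b := G.edist_triangle
    _ ≤ G.edist a w₁ + (G.edist w₁ w₂ + G.edist w₂ b) := by
        gcongr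
        exact G.edist_triangle
    _ ≤ 2 + (2 + 2) := by
        have h2' : G.edist w₂ b ≤ 2 := by rwa [SimpleGraph.edist_comm]
        gcongr
        exact hWdist w₁ hw₁ w₂ hw₂
    _ = 6 := by norm_num
end

section
/- Let n >= 6. If f is a squarefree monomial in S = k[x_1,...,x_n] with NI(C_n)^2 : f = (x_1,...,x_n), then the support of f is a proper subset of {1,...,n}, and the induced subgraph of C_n on the set W = { i ∈ supp(f) : N_{C_n}[i] ⊆ supp(f) } contains a cycle; since an induced subgraph of a cycle graph on a proper vertex subset is a disjoint union of paths, this is a contradiction. Hence (x_1,...,x_n) is not an associated prime of S/NI(C_n)^2 for n >= 6. -/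
open MvPolynomial
open scoped Classical

/-!
For `n ≥ 6` the socle of `S ⧸ NI(Cₙ)^2` vanishes: `NI(Cₙ)^2 : 𝔪 = NI(Cₙ)^2`. Hence
`NI(Cₙ)^2 : f = 𝔪` never holds and `𝔪` is not an associated prime.

As `NI(Cₙ)^2` is a monomial ideal, it suffices to rule out a monomial `x^d ∉ NI(Cₙ)^2` with
`x_t x^d ∈ NI(Cₙ)^2` for all `t`. Such a `d` is squarefree. For `t` in its support, the two
closed neighbourhoods dividing `x_t x^d` both contain `t` and are disjoint elsewhere; if both
missed `t + 1` they would both be `N[t - 1]`, which meet in `t - 1` as well. So the support is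
closed under `t ↦ t + 1`, hence everything, and then `N[0]` and `N[3]`, disjoint as `n ≥ 6`,
give a divisor of `x^d` in `NI(Cₙ)^2`.
-/

namespace Ideal

variable {R : Type*} [CommRing R] {J m : Ideal R}

theorem colon_span_singleton_ne_of_colon_eq_self (hm : m ≠ ⊤) (h : J.colon (m : Set R) = J)
    (f : R) : J.colon (span {f} : Set R) ≠ m := by
  intro hf
  have hfJ : f ∈ J := by
    rw [← h, Submodule.mem_colon]
    intro r hr
    rw [SetLike.mem_coe, ← hf, mem_colon_span_singleton] at hr
    rwa [smul_eq_mul, mul_comm]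
  apply hm
  rw [← hf, Submodule.colon_eq_top_iff_subset]
  exact span_le.mpr (Set.singleton_subset_iff.mpr hfJ)

theorem not_isAssociatedPrime_quotient_of_colon_eq_self [IsNoetherianRing R]
    (h : J.colon (m : Set R) = J) : ¬IsAssociatedPrime m (R ⧸ J) := by
  rw [isAssociatedPrime_iff]
  rintro ⟨hp, x, hx⟩
  obtain ⟨g, rfl⟩ := Quotient.mk_surjective x
  have hg : g ∈ J := by
    rw [← h, Submodule.mem_colon]
    intro r hr
    rw [SetLike.mem_coe, hx, Submodule.mem_colon_singleton, Submodule.mem_bot, Algebra.smul_def,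
      Quotient.algebraMap_eq, ← map_mul, Quotient.eq_zero_iff_mem] at hr
    rwa [smul_eq_mul, mul_comm]
  rw [Quotient.eq_zero_iff_mem.mpr hg, Submodule.colon_singleton_zero] at hx
  exact hp.ne_top hx

end Ideal

namespace MvPolynomial

variable {σ R : Type*} [CommSemiring R]

theorem span_monomial_colon_range_X {E : Set (σ →₀ ℕ)}
    (hE : ∀ d, (∀ t, ∃ e ∈ E, e ≤ d + Finsupp.single t 1) → ∃ e ∈ E, e ≤ d) :
    (Ideal.span ((monomial · (1 : R)) '' E)).colon (Set.range X) =
      Ideal.span ((monomial · 1) '' E) := by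
  refine le_antisymm (fun f hf => mem_ideal_span_monomial_image.mpr fun d hd => ?_) Ideal.le_colon
  refine hE d fun t =>
    mem_ideal_span_monomial_image.mp (Submodule.mem_colon.mp hf _ ⟨t, rfl⟩) _ ?_
  rwa [smul_eq_mul, mem_support_iff, coeff_mul_X, ← mem_support_iff]

end MvPolynomial

theorem Finsupp.le_of_le_add_single {σ : Type*} {g d : σ →₀ ℕ} {t : σ}
    (h : g ≤ d + Finsupp.single t 1) (ht : g t ≤ d t) : g ≤ d := by
  intro v
  by_cases hv : v = t
  · exact hv ▸ ht
  · simpa [Finsupp.single_eq_of_ne hv] using h v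

open Fin.CommRing in
theorem Fin.natCast_ne_zero_of_lt {a n : ℕ} [NeZero n] (h₀ : a ≠ 0) (h : a < n) :
    (a : Fin n) ≠ 0 := by
  rw [Ne, Fin.natCast_eq_zero]
  exact fun hdvd => h₀ (Nat.eq_zero_of_dvd_of_lt hdvd h)

open Fin.CommRing in
theorem Fin.forall_of_add_one_closed {n : ℕ} [NeZero n] {p : Fin n → Prop} {t : Fin n}
    (ht : p t) (h : ∀ v, p v → p (v + 1)) (v : Fin n) : p v := by
  have hm : ∀ m : ℕ, p (t + (m : Fin n)) := by
    intro m
    induction m with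
    | zero => simpa using ht
    | succ m ih => simpa [add_assoc] using h _ ih
  simpa using hm (v - t).val

section NeighborhoodIdeal

variable {n : ℕ} (G : SimpleGraph (Fin n))

noncomputable def closedNbhdExp (i : Fin n) : Fin n →₀ ℕ :=
  ∑ j ∈ closedNbhd G i, Finsupp.single j 1

variable {G}

theorem self_mem_closedNbhd (i : Fin n) : i ∈ closedNbhd G i := by
  simp [closedNbhd]

theorem closedNbhdExp_apply (i v : Fin n) :
    closedNbhdExp G i v = if v ∈ closedNbhd G i then 1 else 0 := by
  simp [closedNbhdExp, Finsupp.finsetSum_apply, Finsupp.single_apply]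

theorem closedNbhdExp_apply_le_one (i v : Fin n) : closedNbhdExp G i v ≤ 1 := by
  rw [closedNbhdExp_apply]
  split_ifs <;> simp

theorem closedNbhdExp_apply_eq_one_iff {i v : Fin n} :
    closedNbhdExp G i v = 1 ↔ v ∈ closedNbhd G i := by
  simp [closedNbhdExp_apply]

theorem closedNbhdExp_apply_eq_zero_iff {i v : Fin n} :
    closedNbhdExp G i v = 0 ↔ v ∉ closedNbhd G i := by
  simp [closedNbhdExp_apply]

theorem closedNbhdExp_apply_self (i : Fin n) : closedNbhdExp G i i = 1 := by
  simp [closedNbhdExp_apply, self_mem_closedNbhd]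

theorem NI_eq_span_monomial (k : Type*) [Field k] :
    NI k G = Ideal.span (Set.range fun i => monomial (closedNbhdExp G i) (1 : k)) := by
  simp_rw [NI, closedNbhdExp, monomial_sum_one]
  rfl

theorem NI_sq_eq_span_monomial (k : Type*) [Field k] :
    NI k G ^ 2 = Ideal.span ((monomial · (1 : k)) ''
      Set.range fun p : Fin n × Fin n => closedNbhdExp G p.1 + closedNbhdExp G p.2) := by
  rw [NI_eq_span_monomial, sq, Ideal.span_mul_span', ← Set.image2_mul, Set.image2_range,
    ← Set.range_comp]
  simp [Function.comp_def, monomial_mul]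

/-- `X ^ d` represents a nonzero socle element of `S ⧸ NI(G)^2`: it lies in `NI(G)^2 : 𝔪` but
not in `NI(G)^2`. -/
structure IsSocleExponent (G : SimpleGraph (Fin n)) (d : Fin n →₀ ℕ) : Prop where
  not_le : ¬∃ i j, closedNbhdExp G i + closedNbhdExp G j ≤ d
  le_add_single : ∀ t, ∃ i j, closedNbhdExp G i + closedNbhdExp G j ≤ d + Finsupp.single t 1

variable {d : Fin n →₀ ℕ}

theorem IsSocleExponent.apply_le_one (h : IsSocleExponent G d) (v : Fin n) : d v ≤ 1 := by
  by_contra! hv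
  obtain ⟨i, j, hij⟩ := h.le_add_single v
  refine h.not_le ⟨i, j, Finsupp.le_of_le_add_single hij ?_⟩
  have := closedNbhdExp_apply_le_one (G := G) i v
  have := closedNbhdExp_apply_le_one (G := G) j v
  rw [Finsupp.add_apply]
  omega

theorem IsSocleExponent.exists_apply_ne_zero [NeZero n] (h : IsSocleExponent G d) :
    ∃ v, d v ≠ 0 := by
  by_contra! h₀
  obtain ⟨i, j, hij⟩ := h.le_add_single 0
  have hle : ∀ v, closedNbhdExp G i v + closedNbhdExp G j v ≤ Finsupp.single 0 1 v :=
    fun v => by simpa [h₀] using hij v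
  have hi : i = 0 := by
    by_contra hi
    simpa [closedNbhdExp_apply_self, Finsupp.single_apply, Ne.symm hi] using hle i
  have hj : j = 0 := by
    by_contra hj
    simpa [closedNbhdExp_apply_self, Finsupp.single_apply, Ne.symm hj] using hle j
  subst hi hj
  simpa [closedNbhdExp_apply_self] using hle 0

end NeighborhoodIdeal

section Cycle

open SimpleGraph Fin.CommRing

variable {n : ℕ} [NeZero n]

theorem mem_closedNbhd_cycleGraph {i v : Fin n} :
    v ∈ closedNbhd (cycleGraph n) i ↔ v = i - 1 ∨ v = i ∨ v = i + 1 := by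
  obtain _ | _ | n := n
  · exact i.elim0
  · simp [Subsingleton.elim (α := Fin 1) v i, self_mem_closedNbhd]
  · simp only [closedNbhd, Finset.mem_filter, Finset.mem_univ, true_and, cycleGraph_adj]
    grind

theorem disjoint_closedNbhd_cycleGraph_add_three (hn : 6 ≤ n) (i : Fin n) :
    Disjoint (closedNbhd (cycleGraph n) i) (closedNbhd (cycleGraph n) (i + 3)) := by
  have hk : ∀ k : ℕ, k ≠ 0 → k < 6 → (k : Fin n) ≠ 0 := fun k h₀ hk =>
    Fin.natCast_ne_zero_of_lt h₀ (by omega)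
  rw [Finset.disjoint_left]
  intro v hv₁ hv₂
  rw [mem_closedNbhd_cycleGraph] at hv₁ hv₂
  rcases hv₁ with rfl | rfl | rfl <;> rcases hv₂ with h | h | h
  · exact hk 3 (by norm_num) (by norm_num) (by push_cast; linear_combination -h)
  · exact hk 4 (by norm_num) (by norm_num) (by push_cast; linear_combination -h)
  · exact hk 5 (by norm_num) (by norm_num) (by push_cast; linear_combination -h)
  · exact hk 2 (by norm_num) (by norm_num) (by push_cast; linear_combination -h)
  · exact hk 3 (by norm_num) (by norm_num) (by push_cast; linear_combination -h)
  · exact hk 4 (by norm_num) (by norm_num) (by push_cast; linear_combination -h)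
  · exact hk 1 (by norm_num) (by norm_num) (by push_cast; linear_combination -h)
  · exact hk 2 (by norm_num) (by norm_num) (by push_cast; linear_combination -h)
  · exact hk 3 (by norm_num) (by norm_num) (by push_cast; linear_combination -h)

theorem eq_sub_one_of_mem_closedNbhd_cycleGraph {i t : Fin n}
    (ht : t ∈ closedNbhd (cycleGraph n) i) (ht' : t + 1 ∉ closedNbhd (cycleGraph n) i) :
    i = t - 1 := by
  rw [mem_closedNbhd_cycleGraph] at ht ht'
  grind

variable {d : Fin n →₀ ℕ}

theorem IsSocleExponent.apply_add_one_ne_zero (h : IsSocleExponent (cycleGraph n) d) {t : Fin n}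
    (ht : d t ≠ 0) : d (t + 1) ≠ 0 := by
  by_cases h₁ : (1 : Fin n) = 0
  · rwa [h₁, add_zero]
  obtain ⟨i, j, hij⟩ := h.le_add_single t
  have hoff : ∀ v ≠ t, closedNbhdExp _ i v + closedNbhdExp _ j v ≤ d v := fun v hv => by
    simpa [Finsupp.single_eq_of_ne hv] using hij v
  have hlt : d t < closedNbhdExp (cycleGraph n) i t + closedNbhdExp (cycleGraph n) j t := by
    by_contra! hle
    exact h.not_le ⟨i, j, Finsupp.le_of_le_add_single hij hle⟩
  have := closedNbhdExp_apply_le_one (G := cycleGraph n) i t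
  have := closedNbhdExp_apply_le_one (G := cycleGraph n) j t
  have hti : t ∈ closedNbhd (cycleGraph n) i := closedNbhdExp_apply_eq_one_iff.mp (by omega)
  have htj : t ∈ closedNbhd (cycleGraph n) j := closedNbhdExp_apply_eq_one_iff.mp (by omega)
  intro h₀
  have hnext := hoff (t + 1) (by simpa using h₁)
  rw [h₀] at hnext
  have hi := eq_sub_one_of_mem_closedNbhd_cycleGraph hti
    (closedNbhdExp_apply_eq_zero_iff.mp (by omega))
  have hj := eq_sub_one_of_mem_closedNbhd_cycleGraph htj
    (closedNbhdExp_apply_eq_zero_iff.mp (by omega))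
  have hprev := hoff (t - 1) (by simpa using h₁)
  rw [hi, hj, closedNbhdExp_apply_self] at hprev
  have := h.apply_le_one (t - 1)
  omega

theorem IsSocleExponent.apply_ne_zero (h : IsSocleExponent (cycleGraph n) d) (v : Fin n) :
    d v ≠ 0 :=
  have ⟨_, ht⟩ := h.exists_apply_ne_zero
  Fin.forall_of_add_one_closed (p := fun v => d v ≠ 0) ht (fun _ => h.apply_add_one_ne_zero) v

theorem not_isSocleExponent_cycleGraph (hn : 6 ≤ n) : ¬IsSocleExponent (cycleGraph n) d := by
  intro h
  refine h.not_le ⟨0, 0 + 3, fun v => ?_⟩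
  have hdisj := (disjoint_closedNbhd_cycleGraph_add_three hn 0).notMem_of_mem_left_finset (a := v)
  have := h.apply_ne_zero v
  rw [Finsupp.add_apply]
  by_cases hv : v ∈ closedNbhd (cycleGraph n) 0
  · rw [closedNbhdExp_apply_eq_zero_iff.mpr (hdisj hv)]
    have := closedNbhdExp_apply_le_one (G := cycleGraph n) 0 v
    omega
  · rw [closedNbhdExp_apply_eq_zero_iff.mpr hv]
    have := closedNbhdExp_apply_le_one (G := cycleGraph n) (0 + 3) v
    omega

end Cycle

theorem NI_cycleGraph_sq_colon_maxIdeal {n : ℕ} (hn : 6 ≤ n) (k : Type*) [Field k] :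
    (NI k (SimpleGraph.cycleGraph n) ^ 2).colon (maxIdeal k n : Set (MvPolynomial (Fin n) k)) =
      NI k (SimpleGraph.cycleGraph n) ^ 2 := by
  have : NeZero n := ⟨by omega⟩
  rw [maxIdeal, Ideal.colon_span, NI_sq_eq_span_monomial]
  refine span_monomial_colon_range_X fun d hd => ?_
  simp only [Set.exists_range_iff, Prod.exists] at hd ⊢
  by_contra h
  exact not_isSocleExponent_cycleGraph hn ⟨h, hd⟩

theorem maxIdeal_ne_top (k : Type*) [Field k] (n : ℕ) : maxIdeal k n ≠ ⊤ := by
  refine ne_top_of_le_ne_top (RingHom.ker_ne_top (constantCoeff (σ := Fin n) (R := k)))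
    (Ideal.span_le.mpr ?_)
  rintro _ ⟨i, rfl⟩
  simp

/-- For `n ≥ 6`: if `f = ∏_{i ∈ s} x_i` is a squarefree monomial with
`NI(Cₙ)^2 : f = (x_1, …, x_n)`, then `supp f` is a proper subset of the vertex set and the
induced subgraph of `Cₙ` on `W = {i ∈ supp f : N[i] ⊆ supp f}` contains a cycle (which is
impossible for a proper subset of a cycle graph); hence `(x_1, …, x_n)` is not an
associated prime of `S/NI(Cₙ)^2`. -/
theorem cycle_not_associated_of_six_le {n : ℕ} (hn : 6 ≤ n) {k : Type*} [Field k] :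
    (∀ s : Finset (Fin n),
      Submodule.colon (NI k (SimpleGraph.cycleGraph n) ^ 2)
          (Ideal.span {∏ i ∈ s, (X i : MvPolynomial (Fin n) k)}) = maxIdeal k n →
        s ≠ Finset.univ ∧
        ∃ (m : ℕ) (c : ℕ → Fin n), 3 ≤ m ∧
          (∀ i < m, c i ∈ s ∧ closedNbhd (SimpleGraph.cycleGraph n) (c i) ⊆ s) ∧
          (Function.Injective fun i : Fin m => c i) ∧
          (∀ i < m, (SimpleGraph.cycleGraph n).Adj (c i) (c (i + 1))) ∧ c m = c 0) ∧
    ¬ IsAssociatedPrime (maxIdeal k n)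
        (MvPolynomial (Fin n) k ⧸ (NI k (SimpleGraph.cycleGraph n) ^ 2)) := by
  have hsocle := NI_cycleGraph_sq_colon_maxIdeal hn k
  refine ⟨fun s hs => ?_, Ideal.not_isAssociatedPrime_quotient_of_colon_eq_self hsocle⟩
  exact (Ideal.colon_span_singleton_ne_of_colon_eq_self (maxIdeal_ne_top k n) hsocle _ hs).elim
end

section
/- Let k >= 2 and n = 3k - 1. Then the Kneser graph K(n,k) is vertex diameter-2-critical: for the vertex u = {1,...,k}, the vertices v = {k+1,...,2k} and w = {2k,...,3k-1} are non-adjacent, and the only vertex adjacent to both v and w is u, so dist_{K(n,k)-u}(v,w) >= 3. -/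
/-- The Kneser graph `K(n,k)`: vertices are the `k`-element subsets of an `n`-element set,
adjacent iff disjoint. -/
def kneserGraph (n k : ℕ) : SimpleGraph {s : Finset (Fin n) // s.card = k} where
  Adj a b := a ≠ b ∧ Disjoint (a : Finset (Fin n)) (b : Finset (Fin n))
  symm := ⟨fun _ _ h => ⟨h.1.symm, h.2.symm⟩⟩
  loopless := ⟨fun _ h => h.1 rfl⟩

/-
The sets `v` and `w` share exactly one point, so `v ∪ w` has `2k - 1` of the `3k - 1` points and
its complement is `u`. A common neighbour of `v` and `w` is a `k`-set inside that complement,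
hence equals `u`. After deleting `u`, the distinct, intersecting sets `v` and `w` are neither
adjacent nor have a common neighbour, so their distance is at least `3`.
-/

open Finset

theorem Fin.card_filter_val {n : ℕ} (p : ℕ → Prop) [DecidablePred p] :
    #{i : Fin n | p i} = #{m ∈ range n | p m} := by
  rw [← card_map Fin.valEmbedding]
  congr 1
  ext m
  simp [Fin.exists_iff, and_comm]

theorem SimpleGraph.three_le_edist_induce_ne_of_forall_adj_adj_eq {V : Type*} (G : SimpleGraph V)
    {u v w : V} (hv : v ≠ u) (hw : w ≠ u) (hvw : v ≠ w) (hadj : ¬G.Adj v w)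
    (hcommon : ∀ z, G.Adj z v → G.Adj z w → z = u) :
    3 ≤ (G.induce {y | y ≠ u}).edist ⟨v, hv⟩ ⟨w, hw⟩ := by
  rw [show (3 : ℕ∞) = 2 + 1 from rfl, ENat.add_one_le_iff (ENat.ofNat_ne_top 2),
    two_lt_edist_iff]
  refine ⟨fun h => hvw (congrArg Subtype.val h), hadj, ?_⟩
  refine Set.eq_empty_of_forall_notMem fun z hz => z.2 (hcommon z ?_ ?_)
  · exact ((mem_commonNeighbors _).mp hz).1.symm
  · exact ((mem_commonNeighbors _).mp hz).2.symm

theorem kneserGraph.eq_of_adj_of_adj {n k : ℕ} {u v w z : {s : Finset (Fin n) // s.card = k}}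
    (hcover : ((v : Finset (Fin n)) ∪ w)ᶜ ⊆ u) (hv : (kneserGraph n k).Adj z v)
    (hw : (kneserGraph n k).Adj z w) : z = u := by
  have hzu : (z : Finset (Fin n)) ⊆ u :=
    (subset_compl_iff_disjoint_right.mpr (disjoint_union_right.mpr ⟨hv.2, hw.2⟩)).trans hcover
  exact Subtype.ext (eq_of_subset_of_card_le hzu (by rw [u.2, z.2]))

section Blocks

variable (k : ℕ)

def initialBlock : Finset (Fin (3 * k - 1)) := {i | (i : ℕ) < k}

def middleBlock : Finset (Fin (3 * k - 1)) := {i | k ≤ (i : ℕ) ∧ (i : ℕ) < 2 * k}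

def finalBlock : Finset (Fin (3 * k - 1)) := {i | 2 * k - 1 ≤ (i : ℕ)}

variable {k}

@[simp]
theorem mem_initialBlock {i : Fin (3 * k - 1)} : i ∈ initialBlock k ↔ (i : ℕ) < k := by
  simp [initialBlock]

@[simp]
theorem mem_middleBlock {i : Fin (3 * k - 1)} :
    i ∈ middleBlock k ↔ k ≤ (i : ℕ) ∧ (i : ℕ) < 2 * k := by
  simp [middleBlock]

@[simp]
theorem mem_finalBlock {i : Fin (3 * k - 1)} : i ∈ finalBlock k ↔ 2 * k - 1 ≤ (i : ℕ) := by
  simp [finalBlock]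

variable (k)

theorem card_initialBlock : #(initialBlock k) = k := by
  rw [initialBlock, Fin.card_filter_val_lt]
  omega

theorem card_middleBlock : #(middleBlock k) = k := by
  have hIco : {m ∈ range (3 * k - 1) | k ≤ m ∧ m < 2 * k} = Ico k (2 * k) := by
    ext m
    simp only [mem_filter, mem_range, mem_Ico]
    omega
  rw [middleBlock, Fin.card_filter_val (fun m => k ≤ m ∧ m < 2 * k), hIco, Nat.card_Ico]
  omega

theorem card_finalBlock : #(finalBlock k) = k := by
  have hIco : {m ∈ range (3 * k - 1) | 2 * k - 1 ≤ m} = Ico (2 * k - 1) (3 * k - 1) := by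
    ext m
    simp only [mem_filter, mem_range, mem_Ico]
    omega
  rw [finalBlock, Fin.card_filter_val (2 * k - 1 ≤ ·), hIco, Nat.card_Ico]
  omega

theorem compl_union_middleBlock_finalBlock_subset :
    (middleBlock k ∪ finalBlock k)ᶜ ⊆ initialBlock k := by
  intro i
  simp only [mem_compl, mem_union, mem_middleBlock, mem_finalBlock, mem_initialBlock]
  omega

variable {k}

theorem not_disjoint_middleBlock_finalBlock (hk : 1 ≤ k) :
    ¬Disjoint (middleBlock k) (finalBlock k) :=
  not_disjoint_iff.mpr ⟨⟨2 * k - 1, by omega⟩, by simp only [mem_middleBlock]; omega,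
    by simp only [mem_finalBlock, le_refl]⟩

theorem middleBlock_ne_initialBlock (hk : 1 ≤ k) : middleBlock k ≠ initialBlock k :=
  ne_of_mem_of_not_mem' (a := ⟨k, by omega⟩) (by simp only [mem_middleBlock]; omega)
    (by simp only [mem_initialBlock, lt_irrefl, not_false_eq_true])

theorem finalBlock_ne_initialBlock (hk : 1 ≤ k) : finalBlock k ≠ initialBlock k :=
  ne_of_mem_of_not_mem' (a := ⟨2 * k - 1, by omega⟩) (by simp only [mem_finalBlock, le_refl])
    (by simp only [mem_initialBlock]; omega)

theorem middleBlock_ne_finalBlock (hk : 2 ≤ k) : middleBlock k ≠ finalBlock k :=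
  ne_of_mem_of_not_mem' (a := ⟨k, by omega⟩) (by simp only [mem_middleBlock]; omega)
    (by simp only [mem_finalBlock]; omega)

end Blocks

/-- For `k ≥ 2` and `n = 3k - 1`, the Kneser graph `K(n,k)` is vertex diameter-2-critical
at `u = {1,…,k}`: the vertices `v = {k+1,…,2k}` and `w = {2k,…,3k-1}` are non-adjacent,
their only common neighbor is `u`, and hence `dist_{K(n,k)-u}(v,w) ≥ 3`. -/
theorem kneser_critical_of_eq (k : ℕ) (hk : 2 ≤ k) :
    ∃ u v w : {s : Finset (Fin (3 * k - 1)) // s.card = k},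
      (u : Finset (Fin (3 * k - 1))) = Finset.univ.filter (fun i : Fin (3 * k - 1) => (i : ℕ) < k) ∧
      (v : Finset (Fin (3 * k - 1))) =
        Finset.univ.filter (fun i : Fin (3 * k - 1) => k ≤ (i : ℕ) ∧ (i : ℕ) < 2 * k) ∧
      (w : Finset (Fin (3 * k - 1))) = Finset.univ.filter (fun i : Fin (3 * k - 1) => 2 * k - 1 ≤ (i : ℕ)) ∧
      v ≠ u ∧ w ≠ u ∧
      ¬ (kneserGraph (3 * k - 1) k).Adj v w ∧
      (∀ z, (kneserGraph (3 * k - 1) k).Adj z v → (kneserGraph (3 * k - 1) k).Adj z w →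
        z = u) ∧
      ∀ (hv : v ∈ ({y | y ≠ u} : Set {s : Finset (Fin (3 * k - 1)) // s.card = k}))
        (hw : w ∈ ({y | y ≠ u} : Set {s : Finset (Fin (3 * k - 1)) // s.card = k})),
        3 ≤ ((kneserGraph (3 * k - 1) k).induce {y | y ≠ u}).edist ⟨v, hv⟩ ⟨w, hw⟩ := by
  have hk₁ : 1 ≤ k := by omega
  let u : {s : Finset (Fin (3 * k - 1)) // #s = k} := ⟨initialBlock k, card_initialBlock k⟩
  let v : {s : Finset (Fin (3 * k - 1)) // #s = k} := ⟨middleBlock k, card_middleBlock k⟩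
  let w : {s : Finset (Fin (3 * k - 1)) // #s = k} := ⟨finalBlock k, card_finalBlock k⟩
  have hvu : v ≠ u := Subtype.coe_ne_coe.mp (middleBlock_ne_initialBlock hk₁)
  have hwu : w ≠ u := Subtype.coe_ne_coe.mp (finalBlock_ne_initialBlock hk₁)
  have hvw : v ≠ w := Subtype.coe_ne_coe.mp (middleBlock_ne_finalBlock hk)
  have hnadj : ¬(kneserGraph (3 * k - 1) k).Adj v w :=
    fun h => not_disjoint_middleBlock_finalBlock hk₁ h.2
  have hcommon (z) : (kneserGraph (3 * k - 1) k).Adj z v → (kneserGraph (3 * k - 1) k).Adj z w →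
      z = u :=
    kneserGraph.eq_of_adj_of_adj (compl_union_middleBlock_finalBlock_subset k)
  exact ⟨u, v, w, rfl, rfl, rfl, hvu, hwu, hnadj, hcommon, fun hv hw =>
    SimpleGraph.three_le_edist_induce_ne_of_forall_adj_adj_eq _ hv hw hvw hnadj hcommon⟩
end

section
/- Let G be a simple graph on [n] with diam(G) >= 3, and suppose there exists a squarefree monomial f with NI(G)^2 : f = (x_1,...,x_n). Let C = [n] \ supp(f). Then for every pair of vertices j, k with dist_G(j,k) >= 3, the set (N_G[j] ∪ N_G[k]) ∩ C is nonempty. -/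
open MvPolynomial
open scoped Classical

lemma edist_le_one_of_mem_closedNbhd {n : ℕ} {G : SimpleGraph (Fin n)} {i j : Fin n}
    (h : i ∈ closedNbhd G j) : G.edist j i ≤ 1 := by
  simp only [closedNbhd, Finset.mem_filter, Finset.mem_univ, true_and] at h
  rcases h with h | h
  · subst h; simp [SimpleGraph.edist_self]
  · exact le_of_eq (SimpleGraph.edist_eq_one_iff_adj.mpr h)

lemma one_not_mem_maxIdeal (k : Type*) [Field k] (n : ℕ) :
    (1 : MvPolynomial (Fin n) k) ∉ maxIdeal k n := by
  intro h1
  have hle : maxIdeal k n ≤ RingHom.ker (eval (fun _ => (0 : k))) := by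
    rw [maxIdeal, Ideal.span_le]
    rintro _ ⟨i, rfl⟩
    simp [RingHom.mem_ker]
  have := hle h1
  simp [RingHom.mem_ker] at this

/-- Suppose `G` has diameter at least `3` and `f = ∏_{i ∈ s} x_i` is a squarefree monomial
with `NI(G)^2 : f = (x_1, …, x_n)`. Put `C = [n] \ supp f`. Then for every pair of
vertices `j, l` at distance at least `3`, the set `(N[j] ∪ N[l]) ∩ C` is nonempty. -/
theorem complement_covers_far_pairs {n : ℕ} {k : Type*} [Field k]
    (G : SimpleGraph (Fin n)) (hdiam : ∃ u v : Fin n, 3 ≤ G.edist u v)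
    (s : Finset (Fin n))
    (hcolon : Submodule.colon (NI k G ^ 2)
        (Ideal.span {∏ i ∈ s, (X i : MvPolynomial (Fin n) k)}) = maxIdeal k n) :
    ∀ j l : Fin n, 3 ≤ G.edist j l →
      ((closedNbhd G j ∪ closedNbhd G l) ∩ (Finset.univ \ s)).Nonempty := by
  intro j l hjl
  by_contra hempty
  rw [Finset.nonempty_iff_ne_empty, ne_eq, not_not] at hempty
  -- From emptiness: N[j] ∪ N[l] ⊆ s
  have hsub : closedNbhd G j ∪ closedNbhd G l ⊆ s := by
    intro i hi
    by_contra his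
    have : i ∈ (closedNbhd G j ∪ closedNbhd G l) ∩ (Finset.univ \ s) := by
      simp [hi, his]
    rw [hempty] at this
    exact absurd this (Finset.notMem_empty i)
  -- Disjointness of the closed neighborhoods
  have hdisj : Disjoint (closedNbhd G j) (closedNbhd G l) := by
    rw [Finset.disjoint_left]
    intro i hij hil
    have h1 : G.edist j i ≤ 1 := edist_le_one_of_mem_closedNbhd hij
    have h2 : G.edist i l ≤ 1 := by
      rw [SimpleGraph.edist_comm]; exact edist_le_one_of_mem_closedNbhd hil
    have : G.edist j l ≤ 2 := le_trans (G.edist_triangle (v := i)) (by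
      calc G.edist j i + G.edist i l ≤ 1 + 1 := add_le_add h1 h2
        _ = 2 := by norm_num)
    have h3 : (3 : ℕ∞) ≤ 2 := le_trans hjl this
    norm_num at h3
  -- f ∈ NI^2
  have hfmem : (∏ i ∈ s, (X i : MvPolynomial (Fin n) k)) ∈ NI k G ^ 2 := by
    have hgen : ∀ a : Fin n, (∏ i ∈ closedNbhd G a, (X i : MvPolynomial (Fin n) k)) ∈ NI k G :=
      fun a => Ideal.subset_span ⟨a, rfl⟩
    have hprod : ((∏ i ∈ closedNbhd G j, (X i : MvPolynomial (Fin n) k)) *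
        ∏ i ∈ closedNbhd G l, (X i : MvPolynomial (Fin n) k)) ∈ NI k G ^ 2 := by
      rw [pow_two]
      exact Ideal.mul_mem_mul (hgen j) (hgen l)
    have hfact : (∏ i ∈ s, (X i : MvPolynomial (Fin n) k)) =
        ((∏ i ∈ closedNbhd G j, (X i : MvPolynomial (Fin n) k)) *
          ∏ i ∈ closedNbhd G l, (X i : MvPolynomial (Fin n) k)) *
        ∏ i ∈ s \ (closedNbhd G j ∪ closedNbhd G l), (X i : MvPolynomial (Fin n) k) := by
      rw [← Finset.prod_union hdisj, mul_comm, Finset.prod_sdiff hsub]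
    rw [hfact]
    exact Ideal.mul_mem_right _ _ hprod
  -- Then 1 ∈ colon = maxIdeal, contradiction
  have h1 : (1 : MvPolynomial (Fin n) k) ∈ maxIdeal k n := by
    rw [← hcolon]
    rw [Submodule.mem_colon]
    intro p hp
    rw [one_smul]
    have : Ideal.span {∏ i ∈ s, (X i : MvPolynomial (Fin n) k)} ≤ NI k G ^ 2 := by
      rw [Ideal.span_le, Set.singleton_subset_iff]; exact hfmem
    exact this hp
  exact one_not_mem_maxIdeal k n h1
end

section
/- Let G be a simple graph on [n] with diam(G) >= 3, and let C ⊆ [n] be a nonempty set such that: (i) for every pair i,j with dist_G(i,j) >= 3, (N_G[i] ∪ N_G[j]) ∩ C ≠ ∅; (ii) for every i ∈ C there exist j,k with dist_G(j,k) >= 3 and (N_G[j] ∪ N_G[k]) ∩ C = {i}; (iii) for every j ∉ C there exist neighbors j_1, j_2 of j with N_G[j_1], N_G[j_2] ⊆ [n] \ C and N_G[j_1] ∩ N_G[j_2] = {j}. Then for f = ∏_{i ∉ C} x_i, one has NI(G)^2 : f = (x_1,...,x_n); in particular the maximal ideal is an associated prime of S/NI(G)^2. -/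
/-!
`NI(G)^2` is the monomial ideal generated by the products `x_{N[i]} x_{N[j]}`, and such a
product divides a squarefree monomial `x_D` exactly when `N[i]`, `N[j]` are disjoint (that is,
`dist(i, j) ≥ 3`) and both lie in `D`. So condition (i) says that `f = x_{[n] \ C}` is not in
`NI(G)^2`. For `t ∈ C` the pair of (ii) has disjoint neighborhoods with union in
`([n] \ C) ∪ {t}`, and for `t ∉ C` the pair of (iii) has
`N[j₁] + N[j₂] = (N[j₁] ∪ N[j₂]) + {t}` as multisets; either way `x_t f ∈ NI(G)^2`.
Hence `NI(G)^2 : f` is a proper ideal containing the maximal ideal `(x_1, …, x_n)`, so equals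
it, and it is the annihilator of the class of `f` in `S/NI(G)^2`.
-/

open MvPolynomial
open scoped Classical

namespace Finset

variable {α : Type*} [DecidableEq α] {s t u : Finset α}

theorem val_add_val_le_val_iff : s.val + t.val ≤ u.val ↔ Disjoint s t ∧ s ∪ t ⊆ u := by
  refine ⟨fun h => ⟨?_, ?_⟩, fun ⟨hst, hu⟩ => ?_⟩
  · rw [← disjoint_val, ← Multiset.Nodup.add_iff s.nodup t.nodup]
    exact Multiset.nodup_of_le h u.nodup
  · exact union_subset (val_le_iff.1 ((Multiset.le_add_right _ _).trans h))
      (val_le_iff.1 ((Multiset.le_add_left _ _).trans h))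
  · rwa [← disjUnion_eq_union s t hst, ← val_le_iff] at hu

theorem val_add_val_le_cons_of_inter_eq_singleton {a : α} (hst : s ∩ t = {a})
    (hu : s ∪ t ⊆ u) :
    s.val + t.val ≤ a ::ₘ u.val := by
  rw [← Multiset.union_add_inter, ← union_val, ← inter_val, hst, add_comm]
  exact Multiset.cons_le_cons a (val_le_iff.2 hu)

end Finset

theorem Multiset.toFinsupp_le_toFinsupp {α : Type*} [DecidableEq α] {s t : Multiset α} :
    toFinsupp s ≤ toFinsupp t ↔ s ≤ t := by
  rw [← Finsupp.coe_orderIsoMultiset_symm]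
  exact OrderIso.le_iff_le _

namespace MvPolynomial

variable {σ R : Type*} [CommSemiring R]

theorem prod_map_X_eq_monomial (m : Multiset σ) :
    (m.map X).prod = monomial (Multiset.toFinsupp m) (1 : R) := by
  induction m using Multiset.induction with
  | empty => simp
  | cons a m ih =>
    rw [Multiset.map_cons, Multiset.prod_cons, ih, ← Multiset.singleton_add,
      Multiset.toFinsupp_add, Multiset.toFinsupp_singleton, X, monomial_mul, one_mul]

theorem prod_X_eq_monomial (s : Finset σ) :
    ∏ j ∈ s, X j = monomial (Multiset.toFinsupp s.val) (1 : R) := by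
  rw [Finset.prod_eq_multiset_prod, prod_map_X_eq_monomial]

theorem prod_map_X_mem_span_sq_iff [Nontrivial R] {ι : Type*} (N : ι → Finset σ)
    (m : Multiset σ) :
    (m.map X).prod ∈
        Ideal.span (Set.range fun i => ∏ j ∈ N i, (X j : MvPolynomial σ R)) ^ 2 ↔
      ∃ i j, (N i).val + (N j).val ≤ m := by
  have hspan : Ideal.span (Set.range fun i => ∏ j ∈ N i, (X j : MvPolynomial σ R)) ^ 2 =
      Ideal.span ((monomial · 1) ''
        Set.range fun ij : ι × ι => Multiset.toFinsupp ((N ij.1).val + (N ij.2).val)) := by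
    rw [sq, Ideal.span_mul_span']
    congr 1
    ext p
    simp [Set.mem_mul, prod_X_eq_monomial, monomial_mul, eq_comm]
  simp only [hspan, prod_map_X_eq_monomial, mem_ideal_span_monomial_image, support_monomial,
    if_neg one_ne_zero, Finset.mem_singleton, forall_eq, Set.exists_range_iff, Prod.exists,
    Multiset.toFinsupp_le_toFinsupp]

theorem idealOfVars_isMaximal {K : Type*} [Field K] : (idealOfVars σ K).IsMaximal := by
  have hker : idealOfVars σ K = RingHom.ker (constantCoeff (σ := σ) (R := K)) := by
    ext p
    rw [← pow_one (idealOfVars σ K), mem_pow_idealOfVars_iff', RingHom.mem_ker, constantCoeff_eq]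
    simp [Finsupp.degree_eq_zero_iff]
  rw [hker]
  exact RingHom.ker_isMaximal_of_surjective _ fun a => ⟨C a, constantCoeff_C _ a⟩

end MvPolynomial

section Colon

variable {R : Type*} [CommRing R] {I P : Ideal R} {f : R}

theorem Ideal.colon_span_singleton_eq_of_isMaximal (hP : P.IsMaximal) (hf : f ∉ I)
    (hle : P ≤ I.colon (Ideal.span {f})) : I.colon (Ideal.span {f}) = P :=
  (hP.eq_of_le (fun htop => hf ((Submodule.colon_eq_top_iff_subset _).1 htop
    (Ideal.mem_span_singleton_self f))) hle).symm

theorem isAssociatedPrime_quotient_of_colon_eq (hP : P.IsPrime)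
    (h : I.colon (Ideal.span {f}) = P) : IsAssociatedPrime P (R ⧸ I) := by
  refine ⟨hP, Ideal.Quotient.mk I f, ?_⟩
  rw [← hP.radical, ← h]
  congr 1
  ext r
  rw [Submodule.mem_colon_singleton, Submodule.mem_bot, Ideal.mem_colon_span_singleton,
    ← Ideal.Quotient.eq_zero_iff_mem, map_mul, Algebra.smul_def, Ideal.Quotient.algebraMap_eq]

end Colon

theorem three_le_edist_iff_disjoint_closedNbhd {n : ℕ} (G : SimpleGraph (Fin n)) {i j : Fin n} :
    3 ≤ G.edist i j ↔ Disjoint (closedNbhd G i) (closedNbhd G j) := by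
  rw [show (3 : ℕ∞) = 2 + 1 from rfl, ENat.add_one_le_iff (by decide),
    SimpleGraph.two_lt_edist_iff]
  simp only [Finset.disjoint_left, closedNbhd, Finset.mem_filter, Finset.mem_univ, true_and,
    Set.eq_empty_iff_forall_notMem, SimpleGraph.mem_commonNeighbors]
  grind [SimpleGraph.Adj.symm]

section CoverConditions

variable {n : ℕ} {k : Type*} [Field k] {G : SimpleGraph (Fin n)} {C : Finset (Fin n)}

theorem prod_map_X_mem_NI_sq_iff (m : Multiset (Fin n)) :
    (m.map X).prod ∈ NI k G ^ 2 ↔ ∃ i j, (closedNbhd G i).val + (closedNbhd G j).val ≤ m :=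
  prod_map_X_mem_span_sq_iff _ m

theorem prod_X_compl_notMem_NI_sq
    (h1 : ∀ i j : Fin n, 3 ≤ G.edist i j →
      ((closedNbhd G i ∪ closedNbhd G j) ∩ C).Nonempty) :
    ∏ i ∈ Finset.univ \ C, (X i : MvPolynomial (Fin n) k) ∉ NI k G ^ 2 := by
  rw [Finset.prod_eq_multiset_prod, prod_map_X_mem_NI_sq_iff]
  rintro ⟨i, j, hle⟩
  obtain ⟨hdisj, hsub⟩ := Finset.val_add_val_le_val_iff.1 hle
  obtain ⟨v, hv⟩ := h1 i j ((three_le_edist_iff_disjoint_closedNbhd G).2 hdisj)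
  rw [Finset.mem_inter] at hv
  exact (Finset.mem_sdiff.1 (hsub hv.1)).2 hv.2

theorem X_mul_prod_X_compl_mem_NI_sq
    (h2 : ∀ i ∈ C, ∃ j l : Fin n, 3 ≤ G.edist j l ∧
      (closedNbhd G j ∪ closedNbhd G l) ∩ C = {i})
    (h3 : ∀ j ∉ C, ∃ j₁ j₂ : Fin n, G.Adj j j₁ ∧ G.Adj j j₂ ∧
      closedNbhd G j₁ ⊆ Finset.univ \ C ∧ closedNbhd G j₂ ⊆ Finset.univ \ C ∧
      closedNbhd G j₁ ∩ closedNbhd G j₂ = {j}) (t : Fin n) :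
    X t * ∏ i ∈ Finset.univ \ C, (X i : MvPolynomial (Fin n) k) ∈ NI k G ^ 2 := by
  rw [Finset.prod_eq_multiset_prod, ← Multiset.prod_cons, ← Multiset.map_cons,
    prod_map_X_mem_NI_sq_iff]
  by_cases ht : t ∈ C
  · obtain ⟨j, l, hdist, hC⟩ := h2 t ht
    refine ⟨j, l, ?_⟩
    rw [← Finset.insert_val_of_notMem (by simp [ht]), Finset.val_add_val_le_val_iff]
    refine ⟨(three_le_edist_iff_disjoint_closedNbhd G).1 hdist, fun v hv => ?_⟩
    by_cases hvC : v ∈ C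
    · simp [← Finset.mem_singleton.1 (hC ▸ Finset.mem_inter.2 ⟨hv, hvC⟩)]
    · simp [hvC]
  · obtain ⟨j₁, j₂, -, -, hsub₁, hsub₂, hinter⟩ := h3 t ht
    exact ⟨j₁, j₂, Finset.val_add_val_le_cons_of_inter_eq_singleton hinter
      (Finset.union_subset hsub₁ hsub₂)⟩

end CoverConditions

theorem colon_eq_max_of_cover_conditions_general {n : ℕ} {k : Type*} [Field k]
    (G : SimpleGraph (Fin n)) (C : Finset (Fin n))
    (h1 : ∀ i j : Fin n, 3 ≤ G.edist i j →
      ((closedNbhd G i ∪ closedNbhd G j) ∩ C).Nonempty)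
    (h2 : ∀ i ∈ C, ∃ j l : Fin n, 3 ≤ G.edist j l ∧
      (closedNbhd G j ∪ closedNbhd G l) ∩ C = {i})
    (h3 : ∀ j ∉ C, ∃ j₁ j₂ : Fin n, G.Adj j j₁ ∧ G.Adj j j₂ ∧
      closedNbhd G j₁ ⊆ Finset.univ \ C ∧ closedNbhd G j₂ ⊆ Finset.univ \ C ∧
      closedNbhd G j₁ ∩ closedNbhd G j₂ = {j}) :
    Submodule.colon (NI k G ^ 2)
        (Ideal.span {∏ i ∈ Finset.univ \ C, (X i : MvPolynomial (Fin n) k)}) =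
      maxIdeal k n ∧
    IsAssociatedPrime (maxIdeal k n) (MvPolynomial (Fin n) k ⧸ (NI k G ^ 2)) := by
  have hmax : (maxIdeal k n).IsMaximal := idealOfVars_isMaximal
  have hcolon := Ideal.colon_span_singleton_eq_of_isMaximal hmax (prod_X_compl_notMem_NI_sq h1)
    (Ideal.span_le.2 <| Set.range_subset_iff.2 fun t =>
      Ideal.mem_colon_span_singleton.2 (X_mul_prod_X_compl_mem_NI_sq h2 h3 t))
  exact ⟨hcolon, isAssociatedPrime_quotient_of_colon_eq hmax.isPrime hcolon⟩

/-- Suppose `G` has diameter at least `3` and `C` is a nonempty set of vertices such that: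
(i) for every pair `i, j` at distance at least `3`, `(N[i] ∪ N[j]) ∩ C ≠ ∅`;
(ii) for every `i ∈ C` there is a pair `j, l` at distance at least `3` with
`(N[j] ∪ N[l]) ∩ C = {i}`;
(iii) every `j ∉ C` has neighbors `j₁, j₂` with `N[j₁], N[j₂] ⊆ [n] \ C` and
`N[j₁] ∩ N[j₂] = {j}`.
Then `NI(G)^2 : ∏_{i ∉ C} x_i = (x_1, …, x_n)`; in particular the maximal homogeneous
ideal is an associated prime of `S/NI(G)^2`. -/
theorem colon_eq_max_of_cover_conditions {n : ℕ} {k : Type*} [Field k]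
    (G : SimpleGraph (Fin n)) (hdiam : ∃ u v : Fin n, 3 ≤ G.edist u v)
    (C : Finset (Fin n)) (hC : C.Nonempty)
    (h1 : ∀ i j : Fin n, 3 ≤ G.edist i j →
      ((closedNbhd G i ∪ closedNbhd G j) ∩ C).Nonempty)
    (h2 : ∀ i ∈ C, ∃ j l : Fin n, 3 ≤ G.edist j l ∧
      (closedNbhd G j ∪ closedNbhd G l) ∩ C = {i})
    (h3 : ∀ j ∉ C, ∃ j₁ j₂ : Fin n, G.Adj j j₁ ∧ G.Adj j j₂ ∧
      closedNbhd G j₁ ⊆ Finset.univ \ C ∧ closedNbhd G j₂ ⊆ Finset.univ \ C ∧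
      closedNbhd G j₁ ∩ closedNbhd G j₂ = {j}) :
    Submodule.colon (NI k G ^ 2)
        (Ideal.span {∏ i ∈ Finset.univ \ C, (X i : MvPolynomial (Fin n) k)}) =
      maxIdeal k n ∧
    IsAssociatedPrime (maxIdeal k n) (MvPolynomial (Fin n) k ⧸ (NI k G ^ 2)) :=
  colon_eq_max_of_cover_conditions_general G C h1 h2 h3
end
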